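/- Let x and y be words in letters 1,…,n such that x[1,2] = y[1,2] and x[2,n] = y[2,n], where x[i,j] denotes the subword of x consisting of letters between i and j inclusive. Then x and y are related by a sequence of commutations of adjacent letters a, b with |a − b| ≥ 2; in particular u_x(λ) = u_y(λ) for all partitions λ. -/

import Mathlib

/-- A partition, represented by its column lengths (the conjugate):
`c i` is the number of boxes in column `i`. -/
def IsPartition (c : ℕ+ → ℕ) : Prop :=
  (∀ i : ℕ+, c (i + 1) ≤ c i) ∧ ∃ N : ℕ+, ∀ i : ℕ+, N ≤ i → c i = 0

open Classical in
/-- The Schur operator `u_i`: add a box to column `i` if the result is a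
partition, else `none` (representing `0`). -/
noncomputable def addBox (i : ℕ+) (c : ℕ+ → ℕ) : Option (ℕ+ → ℕ) :=
  if IsPartition (Function.update c i (c i + 1)) then
    some (Function.update c i (c i + 1))
  else none

/-- `u_x = u_{x_1} ∘ ⋯ ∘ u_{x_l}` for a word `x = x_1 ⋯ x_l`. -/
noncomputable def schurWord (x : List ℕ+) (c : ℕ+ → ℕ) : Option (ℕ+ → ℕ) :=
  x.foldr (fun i o => o.bind (addBox i)) (some c)

/-- `α_i(x)`: the maximum over suffixes `s` of `x` of `w_{i+1}(s) - w_i(s)`. -/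
def alpha (i : ℕ+) (x : List ℕ+) : ℕ :=
  (x.tails.map (fun s => s.count (i + 1) - s.count i)).foldr max 0

/-- A commutation move: swap adjacent letters `a`, `b` with `|a - b| ≥ 2`. -/
inductive CommStep : List ℕ+ → List ℕ+ → Prop
  | comm (p s : List ℕ+) (a b : ℕ+) (h : 2 ≤ |((a : ℕ) : ℤ) - ((b : ℕ) : ℤ)|) :
      CommStep (p ++ [a, b] ++ s) (p ++ [b, a] ++ s)

/-- Equivalence of words under commutation moves. -/
def CommEquiv : List ℕ+ → List ℕ+ → Prop := Relation.EqvGen CommStep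

/-- `x[i,j]`: the subword of `x` consisting of the letters in `{i, …, j}`. -/
def restr (i j : ℕ+) (x : List ℕ+) : List ℕ+ :=
  x.filter (fun a => decide (i ≤ a ∧ a ≤ j))

/-!
Letters `a`, `b` with `|a - b| ≤ 1` both lie in `[1, 2]` or both in `[2, n]`, so the two projections
record the relative order of every pair of non-commuting letters. Hence, by induction on `x`, the
first letter `a` of `x` is preceded in `y` only by letters commuting with it, so it can be moved to
the front of `y`. The Schur operators `u_a`, `u_b` commute on partitions when `|a - b| ≥ 2`, since
additions of boxes to non-adjacent columns do not interact, so `u_x = u_y`.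
-/

open Function

lemma CommStep.cons (a : ℕ+) {x y : List ℕ+} (h : CommStep x y) : CommStep (a :: x) (a :: y) := by
  obtain ⟨p, s, b, c, hbc⟩ := h
  exact CommStep.comm (a :: p) s b c hbc

lemma CommEquiv.cons (a : ℕ+) {x y : List ℕ+} (h : CommEquiv x y) :
    CommEquiv (a :: x) (a :: y) := by
  induction h with
  | rel _ _ h => exact Relation.EqvGen.rel _ _ (h.cons a)
  | refl => exact Relation.EqvGen.refl _
  | symm _ _ _ ih => exact Relation.EqvGen.symm _ _ ih
  | trans _ _ _ _ _ ih₁ ih₂ => exact Relation.EqvGen.trans _ _ _ ih₁ ih₂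

lemma commEquiv_append_cons (a : ℕ+) {p : List ℕ+} (q : List ℕ+)
    (hp : ∀ b ∈ p, 2 ≤ |((b : ℕ) : ℤ) - ((a : ℕ) : ℤ)|) :
    CommEquiv (p ++ a :: q) (a :: (p ++ q)) := by
  induction p with
  | nil => exact Relation.EqvGen.refl _
  | cons b p ih =>
    have hswap : CommStep ([] ++ [b, a] ++ (p ++ q)) ([] ++ [a, b] ++ (p ++ q)) :=
      CommStep.comm [] _ b a (hp b List.mem_cons_self)
    exact Relation.EqvGen.trans _ _ _
      ((ih fun c hc => hp c (List.mem_cons_of_mem b hc)).cons b) (Relation.EqvGen.rel _ _ hswap)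

section Projection

variable {P Q : ℕ+ → Bool}

lemma exists_commEquiv_cons_of_filter_eq
    (hdep : ∀ a b : ℕ+, |((a : ℕ) : ℤ) - ((b : ℕ) : ℤ)| < 2 → P a ∧ P b ∨ Q a ∧ Q b)
    {a : ℕ+} {x y : List ℕ+} (ha : P a)
    (hP : (a :: x).filter P = y.filter P) (hQ : (a :: x).filter Q = y.filter Q) :
    ∃ y', CommEquiv y (a :: y') ∧ x.filter P = y'.filter P ∧ x.filter Q = y'.filter Q := by
  rw [List.filter_cons_of_pos ha] at hP
  obtain ⟨p, q, rfl, hpP, -, hqP⟩ := List.filter_eq_cons_iff.mp hP.symm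
  have hfilterP : x.filter P = (p ++ q).filter P := by
    rw [List.filter_append, List.filter_eq_nil_iff.mpr hpP, hqP, List.nil_append]
  by_cases hQa : Q a
  · obtain rfl : p = [] := by
      rcases p with _ | ⟨b, p⟩
      · rfl
      have hQb : Q b := ((hdep b b (by simp)).resolve_left (by simp [hpP b (by simp)])).1
      rw [List.filter_cons_of_pos hQa, List.cons_append, List.filter_cons_of_pos hQb] at hQ
      have hab : a = b := (List.cons_eq_cons.mp hQ).1
      exact absurd (hab ▸ ha) (hpP b List.mem_cons_self)
    exact ⟨q, Relation.EqvGen.refl _, hfilterP, by simpa [List.filter_cons, hQa] using hQ⟩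
  · have hcomm : ∀ b ∈ p, 2 ≤ |((b : ℕ) : ℤ) - ((a : ℕ) : ℤ)| := fun b hb => by
      by_contra! hba
      rcases hdep b a hba with ⟨hPb, -⟩ | ⟨-, hQa'⟩
      exacts [hpP b hb hPb, hQa hQa']
    refine ⟨p ++ q, commEquiv_append_cons a q hcomm, hfilterP, ?_⟩
    simpa [List.filter_append, List.filter_cons, hQa] using hQ

theorem commEquiv_of_filter_eq
    (hdep : ∀ a b : ℕ+, |((a : ℕ) : ℤ) - ((b : ℕ) : ℤ)| < 2 → P a ∧ P b ∨ Q a ∧ Q b) :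
    ∀ {x y : List ℕ+}, x.filter P = y.filter P → x.filter Q = y.filter Q → CommEquiv x y
  | [], y, hP, hQ => by
    obtain rfl : y = [] := List.eq_nil_iff_forall_not_mem.mpr fun b hb => by
      rcases hdep b b (by simp) with ⟨hb', -⟩ | ⟨hb', -⟩
      · exact List.not_mem_nil (hP ▸ List.mem_filter.mpr ⟨hb, hb'⟩)
      · exact List.not_mem_nil (hQ ▸ List.mem_filter.mpr ⟨hb, hb'⟩)
    exact Relation.EqvGen.refl _
  | a :: x, y, hP, hQ => by
    obtain ⟨y', hy, hP', hQ'⟩ :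
        ∃ y', CommEquiv y (a :: y') ∧ x.filter P = y'.filter P ∧ x.filter Q = y'.filter Q := by
      rcases hdep a a (by simp) with ⟨ha, -⟩ | ⟨ha, -⟩
      · exact exists_commEquiv_cons_of_filter_eq hdep ha hP hQ
      · obtain ⟨y', hy, hQ', hP'⟩ :=
          exists_commEquiv_cons_of_filter_eq (fun a b h => (hdep a b h).symm) ha hQ hP
        exact ⟨y', hy, hP', hQ'⟩
    exact Relation.EqvGen.trans _ _ _ ((commEquiv_of_filter_eq hdep hP' hQ').cons a)
      (Relation.EqvGen.symm _ _ hy)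

end Projection

lemma isPartition_update_of_isPartition_update_update {a b : ℕ+} {c : ℕ+ → ℕ}
    (hba : b ≠ a) (hba' : b ≠ a + 1) (hc : IsPartition c)
    (h : IsPartition (update (update c b (c b + 1)) a (c a + 1))) :
    IsPartition (update c b (c b + 1)) := by
  set c' := update c b (c b + 1)
  have hcc' : c ≤ c' := le_update_self_iff.mpr (Nat.le_succ _)
  have hc'a : c' a = c a := update_of_ne hba.symm _ _
  have hc'd : c' ≤ update c' a (c a + 1) := le_update_self_iff.mpr (hc'a ▸ Nat.le_succ _)
  refine ⟨fun i => ?_, ?_⟩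
  -- The only new inequality, at column `b`, is inherited from the two-box shape,
  -- because `a` is neither `b` nor `b - 1`.
  · by_cases hib : i + 1 = b
    · have hia : i ≠ a := fun hia => hba' (hia ▸ hib.symm)
      have h' := h.1 i
      rwa [update_of_ne (hib ▸ hba), update_of_ne hia] at h'
    · calc c' (i + 1) = c (i + 1) := update_of_ne hib _ _
        _ ≤ c i := hc.1 i
        _ ≤ c' i := hcc' i
  · obtain ⟨N, hN⟩ := h.2
    exact ⟨N, fun i hi => Nat.eq_zero_of_le_zero (hN i hi ▸ hc'd i)⟩

open Classical in
lemma addBox_bind_addBox {a b : ℕ+} {c : ℕ+ → ℕ} (hba : b ≠ a) (hba' : b ≠ a + 1)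
    (hc : IsPartition c) :
    (addBox b c).bind (addBox a) =
      if IsPartition (update (update c b (c b + 1)) a (c a + 1))
      then some (update (update c b (c b + 1)) a (c a + 1)) else none := by
  have hc'a : update c b (c b + 1) a = c a := update_of_ne hba.symm _ _
  by_cases hb : IsPartition (update c b (c b + 1))
  · simp only [addBox, if_pos hb, Option.bind_some, hc'a]
  · rw [addBox, if_neg hb, Option.bind_none,
      if_neg (mt (isPartition_update_of_isPartition_update_update hba hba' hc) hb)]

lemma addBox_comm {a b : ℕ+} (hab : 2 ≤ |((a : ℕ) : ℤ) - ((b : ℕ) : ℤ)|) {c : ℕ+ → ℕ}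
    (hc : IsPartition c) :
    (addBox b c).bind (addBox a) = (addBox a c).bind (addBox b) := by
  have hab' : (a : ℕ) + 2 ≤ b ∨ (b : ℕ) + 2 ≤ a := by
    rcases abs_cases (((a : ℕ) : ℤ) - ((b : ℕ) : ℤ)) with ⟨h, -⟩ | ⟨h, -⟩ <;> omega
  have hne : ∀ i j : ℕ+, (i : ℕ) ≠ j → i ≠ j := fun i j h e => h (congrArg _ e)
  have hsucc : ∀ i : ℕ+, ((i + 1 : ℕ+) : ℕ) = i + 1 := fun _ => rfl
  rw [addBox_bind_addBox (hne _ _ (by omega)) (hne _ _ (by rw [hsucc]; omega)) hc,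
    addBox_bind_addBox (hne _ _ (by omega)) (hne _ _ (by rw [hsucc]; omega)) hc,
    update_comm (hne _ _ (by omega))]

lemma schurWord_cons (i : ℕ+) (x : List ℕ+) (c : ℕ+ → ℕ) :
    schurWord (i :: x) c = (schurWord x c).bind (addBox i) := rfl

lemma schurWord_append (x y : List ℕ+) (c : ℕ+ → ℕ) :
    schurWord (x ++ y) c = (schurWord y c).bind (schurWord x) := by
  induction x with
  | nil => exact (Option.bind_fun_some _).symm
  | cons i x ih => rw [List.cons_append, schurWord_cons, ih, Option.bind_assoc]; rfl

lemma isPartition_of_addBox_eq_some {i : ℕ+} {c d : ℕ+ → ℕ} (h : addBox i c = some d) :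
    IsPartition d := by
  unfold addBox at h
  split_ifs at h with hP
  exact Option.some_injective _ h ▸ hP

lemma isPartition_of_schurWord_eq_some {x : List ℕ+} {c d : ℕ+ → ℕ} (hc : IsPartition c)
    (h : schurWord x c = some d) : IsPartition d := by
  cases x with
  | nil => exact Option.some_injective _ h ▸ hc
  | cons i x =>
    obtain ⟨e, -, hd⟩ := Option.bind_eq_some_iff.mp h
    exact isPartition_of_addBox_eq_some hd

lemma CommStep.schurWord_eq {x y : List ℕ+} (h : CommStep x y) {c : ℕ+ → ℕ}
    (hc : IsPartition c) : schurWord x c = schurWord y c := by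
  obtain ⟨p, s, a, b, hab⟩ := h
  simp only [schurWord_append]
  cases hs : schurWord s c with
  | none => rfl
  | some d =>
    exact congrArg (·.bind (schurWord p))
      (addBox_comm hab (isPartition_of_schurWord_eq_some hc hs))

lemma CommEquiv.schurWord_eq {x y : List ℕ+} (h : CommEquiv x y) {c : ℕ+ → ℕ}
    (hc : IsPartition c) : schurWord x c = schurWord y c := by
  induction h with
  | rel _ _ h => exact h.schurWord_eq hc
  | refl => rfl
  | symm _ _ _ ih => exact ih.symm
  | trans _ _ _ _ _ ih₁ ih₂ => exact ih₁.trans ih₂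

theorem stmt14 (n : ℕ+) (x y : List ℕ+)
    (hx : ∀ a ∈ x, a ≤ n) (hy : ∀ a ∈ y, a ≤ n)
    (h12 : restr 1 2 x = restr 1 2 y) (h2n : restr 2 n x = restr 2 n y) :
    CommEquiv x y ∧
      (∀ c : ℕ+ → ℕ, IsPartition c → schurWord x c = schurWord y c) := by
  have restr_one_two : ∀ w : List ℕ+, restr 1 2 w = w.filter (· ≤ 2) := fun w =>
    List.filter_congr fun a _ => by simp
  have restr_two_n : ∀ w : List ℕ+, (∀ a ∈ w, a ≤ n) → restr 2 n w = w.filter (2 ≤ ·) :=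
    fun w hw => List.filter_congr fun a ha => by simp [hw a ha]
  have hequiv : CommEquiv x y := by
    refine commEquiv_of_filter_eq (fun a b hab => ?_)
      (by rw [← restr_one_two, ← restr_one_two, h12])
      (by rw [← restr_two_n x hx, ← restr_two_n y hy, h2n])
    simp only [decide_eq_true_eq, ← PNat.coe_le_coe, PNat.val_ofNat]
    rw [abs_lt] at hab
    omega
  exact ⟨hequiv, fun c hc => hequiv.schurWord_eq hc⟩
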